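/- Any embedding f of the 3-star K_{1,3} (a root with three children, graph distance: root to leaf is 1, leaf to leaf is 2) into Euclidean space ℝ^n has distortion at least 2/√3. That is, there is no r > 0 and D < 2/√3 with r·d_G(i,j) ≤ ‖f(i)-f(j)‖ ≤ D·r·d_G(i,j) for all pairs i,j. -/

import Mathlib

/-!
With `u, v, w` the leaves seen from the root, every inner product space satisfies
`‖u - v‖² + ‖v - w‖² + ‖w - u‖² = 3 (‖u‖² + ‖v‖² + ‖w‖²) - ‖u + v + w‖²`.
Under a `D`-embedding at scale `r` the left side is at least `3 (2r)²` and the right side at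
most `9 (Dr)²`, so `4 ≤ 3 D²`.
-/

/-- Graph distance on the 3-star `K_{1,3}`: vertex `0` is the root,
vertices `1,2,3` are the leaves. -/
def dK13 (i j : Fin 4) : ℝ :=
  if i = j then 0 else if i = 0 ∨ j = 0 then 1 else 2

section StarInequality

variable {E : Type*} [NormedAddCommGroup E] [InnerProductSpace ℝ E]

theorem norm_sub_sq_add_norm_sub_sq_add_norm_sub_sq_le (c x y z : E) :
    ‖x - y‖ ^ 2 + ‖y - z‖ ^ 2 + ‖z - x‖ ^ 2 ≤
      3 * (‖x - c‖ ^ 2 + ‖y - c‖ ^ 2 + ‖z - c‖ ^ 2) := by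
  have hs := real_inner_self_nonneg (F := E) (x := x + y + z - (3 : ℝ) • c)
  simp only [← real_inner_self_eq_norm_sq, inner_sub_left, inner_sub_right, inner_add_left,
    inner_add_right, real_inner_smul_left, real_inner_smul_right] at hs ⊢
  rw [real_inner_comm x y, real_inner_comm x z, real_inner_comm y z, real_inner_comm c x,
    real_inner_comm c y, real_inner_comm c z] at *
  linarith

theorem le_sqrt_three_mul_of_star {c x y z : E} {m M : ℝ}
    (hxy : m ≤ ‖x - y‖) (hyz : m ≤ ‖y - z‖) (hzx : m ≤ ‖z - x‖)
    (hx : ‖x - c‖ ≤ M) (hy : ‖y - c‖ ≤ M) (hz : ‖z - c‖ ≤ M) :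
    m ≤ √3 * M := by
  have hM : 0 ≤ M := (norm_nonneg _).trans hx
  rcases le_or_gt m 0 with hm | hm
  · exact hm.trans (by positivity)
  have hsq : 3 * m ^ 2 ≤ 3 * (3 * M ^ 2) :=
    calc 3 * m ^ 2 = m ^ 2 + m ^ 2 + m ^ 2 := by ring
      _ ≤ ‖x - y‖ ^ 2 + ‖y - z‖ ^ 2 + ‖z - x‖ ^ 2 := by gcongr
      _ ≤ 3 * (‖x - c‖ ^ 2 + ‖y - c‖ ^ 2 + ‖z - c‖ ^ 2) :=
        norm_sub_sq_add_norm_sub_sq_add_norm_sub_sq_le c x y z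
      _ ≤ 3 * (M ^ 2 + M ^ 2 + M ^ 2) := by gcongr
      _ = 3 * (3 * M ^ 2) := by ring
  calc m = √(m ^ 2) := (Real.sqrt_sq hm.le).symm
    _ ≤ √(3 * M ^ 2) := Real.sqrt_le_sqrt (by linarith)
    _ = √3 * M := by rw [Real.sqrt_mul (by norm_num), Real.sqrt_sq hM]

end StarInequality

/-- Every Euclidean embedding of `K_{1,3}` has distortion at least `2/√3`. -/
theorem k13_distortion_lower_bound {n : ℕ} (f : Fin 4 → EuclideanSpace ℝ (Fin n))
    (r D : ℝ) (hr : 0 < r) (hD : D < 2 / Real.sqrt 3) :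
    ¬ (∀ i j : Fin 4,
        r * dK13 i j ≤ ‖f i - f j‖ ∧ ‖f i - f j‖ ≤ D * r * dK13 i j) := by
  intro h
  have h12 : r * 2 ≤ ‖f 1 - f 2‖ := by simpa [dK13] using (h 1 2).1
  have h23 : r * 2 ≤ ‖f 2 - f 3‖ := by simpa [dK13] using (h 2 3).1
  have h31 : r * 2 ≤ ‖f 3 - f 1‖ := by simpa [dK13] using (h 3 1).1
  have h10 : ‖f 1 - f 0‖ ≤ D * r := by simpa [dK13] using (h 1 0).2
  have h20 : ‖f 2 - f 0‖ ≤ D * r := by simpa [dK13] using (h 2 0).2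
  have h30 : ‖f 3 - f 0‖ ≤ D * r := by simpa [dK13] using (h 3 0).2
  have hstar : r * 2 ≤ √3 * (D * r) := le_sqrt_three_mul_of_star h12 h23 h31 h10 h20 h30
  have hD' : √3 * D < 2 := by rwa [lt_div_iff₀ (by positivity), mul_comm] at hD
  nlinarith
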